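/- arXiv:2301.00932 — 5 statements merged into one kernel-verified Lean document; each statement's English description precedes it below -/
import Mathlib

section
/- For every n ≥ 3, the cycle C_n is the only connected simple graph without isolated vertices, other than possibly K_{1,3} when n = 3, whose line graph is isomorphic to C_n. In particular, for n = 5: C_5 is the only iso-free graph whose line graph is isomorphic to C_5. -/
/-!
Three edges at a common vertex are pairwise adjacent in the line graph, and `C_n` has a triangle
only for `n = 3`; then these three edges are all the edges of `G`, so `G` is the star `K_{1,3}`.
Otherwise every vertex has degree at most two, and no vertex has degree one: the edge at a leaf
meets two other edges, necessarily at its other end, which would then have degree three. So `G`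
is 2-regular, and then `v ↦ {edges at v}` is an isomorphism `G ≃g L(L(G)) ≃g L(C_n) ≃g C_n`.
-/

open SimpleGraph

open Fin.CommRing

namespace SimpleGraph

theorem eq_three_of_cycleGraph_adj {n : ℕ} {a b c : Fin n} (hab : (cycleGraph n).Adj a b)
    (hac : (cycleGraph n).Adj a c) (hbc : (cycleGraph n).Adj b c) : n = 3 := by
  obtain _ | _ | n := n
  · exact a.elim0
  · exact (cycleGraph_one_adj hab).elim
  have hb : b ∈ (cycleGraph (n + 2)).neighborSet a := hab
  have hc : c ∈ (cycleGraph (n + 2)).neighborSet a := hac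
  rw [cycleGraph_neighborSet] at hb hc
  -- `{b, c} = {a - 1, a + 1}`, so `b ~ c` says `±2 = 1`
  have h3 : ((3 : ℕ) : Fin (n + 2)) = 0 := by
    have one_ne : (1 : Fin (n + 2)) ≠ 0 := one_ne_zero
    rcases hb with rfl | rfl <;> rcases hc with rfl | rfl <;>
      rcases cycleGraph_adj.mp hbc with h | h
    all_goals first
      | exact (hbc.ne rfl).elim
      | exact (one_ne (by linear_combination h)).elim
      | push_cast; linear_combination -h
  have h3_dvd := Fin.natCast_eq_zero.mp h3
  obtain rfl | rfl : n = 0 ∨ n = 1 := by have := Nat.le_of_dvd (by norm_num) h3_dvd; omega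
  · exact absurd h3_dvd (by norm_num)
  · rfl

theorem cycleGraph_adj_iff_eq_add_one {n : ℕ} {i j : Fin (n + 2)} :
    (cycleGraph (n + 2)).Adj i j ↔ j = i + 1 ∨ i = j + 1 := by
  rw [cycleGraph_adj, sub_eq_iff_eq_add, sub_eq_iff_eq_add, add_comm 1, add_comm 1]
  tauto

theorem exists_ne_adj_cycleGraph {n : ℕ} (i : Fin (n + 3)) :
    ∃ a b, a ≠ b ∧ (cycleGraph (n + 3)).Adj i a ∧ (cycleGraph (n + 3)).Adj i b :=
  ⟨i + 1, i - 1, fun h => two_ne_zero (by linear_combination h : (2 : Fin (n + 3)) = 0),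
    by simp [cycleGraph_adj], by simp [cycleGraph_adj]⟩

def cycleGraphEdge (n : ℕ) (i : Fin (n + 2)) : (cycleGraph (n + 2)).edgeSet :=
  ⟨s(i, i + 1), cycleGraph_adj_iff_eq_add_one.mpr (.inl rfl)⟩

theorem cycleGraphEdge_injective (n : ℕ) : Function.Injective (cycleGraphEdge (n + 1)) := by
  intro i j h
  rcases Sym2.eq_iff.mp (congrArg Subtype.val h) with ⟨h, -⟩ | ⟨rfl, h⟩
  · exact h
  · exact absurd (by linear_combination h : (2 : Fin (n + 3)) = 0) two_ne_zero

theorem cycleGraphEdge_surjective (n : ℕ) : Function.Surjective (cycleGraphEdge n) := by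
  rintro ⟨z, hz⟩
  induction z using Sym2.ind with
  | _ a b =>
    rcases cycleGraph_adj_iff_eq_add_one.mp (mem_edgeSet _ |>.mp hz) with rfl | rfl
    · exact ⟨a, rfl⟩
    · exact ⟨b, Subtype.ext Sym2.eq_swap⟩

noncomputable def cycleGraphIsoLineGraph (n : ℕ) :
    cycleGraph (n + 3) ≃g (cycleGraph (n + 3)).lineGraph where
  toEquiv := Equiv.ofBijective (cycleGraphEdge (n + 1))
    ⟨cycleGraphEdge_injective n, cycleGraphEdge_surjective (n + 1)⟩
  map_rel_iff' {i j} := by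
    change (lineGraph _).Adj (cycleGraphEdge _ i) (cycleGraphEdge _ j) ↔ _
    rw [lineGraph_adj_iff_exists, (cycleGraphEdge_injective n).ne_iff,
      cycleGraph_adj_iff_eq_add_one]
    simp only [cycleGraphEdge, Sym2.mem_iff]
    constructor
    · rintro ⟨hij, x, rfl | rfl, h | h⟩
      · exact (hij h).elim
      · exact Or.inr h
      · exact Or.inl h.symm
      · exact (hij (add_right_cancel h)).elim
    · rintro (rfl | rfl)
      · exact ⟨fun h => one_ne_zero (by linear_combination -h : (1 : Fin (n + 3)) = 0),
          _, Or.inr rfl, Or.inl rfl⟩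
      · exact ⟨fun h => one_ne_zero (by linear_combination h : (1 : Fin (n + 3)) = 0),
          _, Or.inl rfl, Or.inr rfl⟩

variable {V : Type*} {G : SimpleGraph V}

variable (G) in
/-- `G.incidenceSet v`, as a set of vertices of `G.lineGraph`. -/
def incidentEdges (v : V) : Set G.edgeSet := {e | v ∈ (e : Sym2 V)}

theorem mem_incidentEdges {v : V} {e : G.edgeSet} :
    e ∈ G.incidentEdges v ↔ v ∈ (e : Sym2 V) :=
  Iff.rfl

theorem isClique_incidentEdges (v : V) : G.lineGraph.IsClique (G.incidentEdges v) :=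
  fun _ ha _ hb hne => lineGraph_adj_iff_exists.mpr ⟨hne, v, ha, hb⟩

theorem subsingleton_incidentEdges_inter {u v : V} (huv : u ≠ v) :
    (G.incidentEdges u ∩ G.incidentEdges v).Subsingleton := by
  rintro a ⟨hau, hav⟩ b ⟨hbu, hbv⟩
  exact Subtype.ext (((Sym2.mem_and_mem_iff huv).mp ⟨hau, hav⟩).trans
    ((Sym2.mem_and_mem_iff huv).mp ⟨hbu, hbv⟩).symm)

theorem exists_three_le_encard_incidentEdges_of_incidentEdges_eq_singleton {v : V}
    {e a b : G.edgeSet} (hv : G.incidentEdges v = {e}) (hab : a ≠ b)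
    (ha : G.lineGraph.Adj e a) (hb : G.lineGraph.Adj e b) :
    ∃ w, 3 ≤ (G.incidentEdges w).encard := by
  have hve : e ∈ G.incidentEdges v := hv ▸ rfl
  obtain ⟨w, hw⟩ := Sym2.mem_iff_exists.mp hve
  have mem_of_adj : ∀ c, G.lineGraph.Adj e c → c ∈ G.incidentEdges w := by
    intro c hc
    obtain ⟨hec, x, hxe, hxc⟩ := lineGraph_adj_iff_exists.mp hc
    rw [hw, Sym2.mem_iff] at hxe
    rcases hxe with rfl | rfl
    · exact (hec (hv.subset hxc).symm).elim
    · exact hxc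
  refine ⟨w, le_of_eq_of_le ?_ (Set.encard_le_encard (s := {e, a, b}) ?_)⟩
  · exact (Set.encard_eq_three.mpr ⟨e, a, b, ha.ne, hb.ne, hab, rfl⟩).symm
  · rintro c (rfl | rfl | rfl)
    · exact show w ∈ (c : Sym2 V) from hw ▸ Sym2.mem_mk_right v w
    · exact mem_of_adj c ha
    · exact mem_of_adj c hb

theorem encard_incidentEdges_eq_two
    (hL : ∀ e, ∃ a b, a ≠ b ∧ G.lineGraph.Adj e a ∧ G.lineGraph.Adj e b)
    (hG : ∀ v, ∃ w, G.Adj v w) (h3 : ∀ v, (G.incidentEdges v).encard < 3) (v : V) :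
    (G.incidentEdges v).encard = 2 := by
  obtain ⟨w, hvw⟩ := hG v
  have h1 : 1 ≤ (G.incidentEdges v).encard :=
    Set.one_le_encard_iff_nonempty.mpr ⟨⟨s(v, w), hvw⟩, Sym2.mem_mk_left _ _⟩
  have hne1 : (G.incidentEdges v).encard ≠ 1 := by
    intro h
    obtain ⟨e, he⟩ := Set.encard_eq_one.mp h
    obtain ⟨a, b, hab, ha, hb⟩ := hL e
    obtain ⟨u, hu⟩ :=
      exists_three_le_encard_incidentEdges_of_incidentEdges_eq_singleton he hab ha hb
    exact (h3 u).not_ge hu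
  have h3v := h3 v
  generalize (G.incidentEdges v).encard = k at h1 hne1 h3v ⊢
  lift k to ℕ using h3v.ne_top
  norm_cast at *
  omega

theorem exists_lineGraph_edge_eq_incidentEdges {v : V} (h : (G.incidentEdges v).encard = 2) :
    ∃ z : G.lineGraph.edgeSet, ∀ e, e ∈ (z : Sym2 G.edgeSet) ↔ e ∈ G.incidentEdges v := by
  obtain ⟨a, b, hab, hv⟩ := Set.encard_eq_two.mp h
  have ha : a ∈ G.incidentEdges v := hv ▸ Or.inl rfl
  have hb : b ∈ G.incidentEdges v := hv ▸ Or.inr rfl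
  exact ⟨⟨s(a, b), isClique_incidentEdges v ha hb hab⟩,
    fun e => by rw [hv]; exact Sym2.mem_iff⟩

theorem nonempty_iso_lineGraph_lineGraph (h : ∀ v, (G.incidentEdges v).encard = 2) :
    Nonempty (G ≃g G.lineGraph.lineGraph) := by
  choose φ hφ using fun v => exists_lineGraph_edge_eq_incidentEdges (h v)
  have φ_inj : Function.Injective φ := by
    intro u v huv
    by_contra hne
    obtain ⟨a, b, hab, hu⟩ := Set.encard_eq_two.mp (h u)
    have mem_v : ∀ e ∈ G.incidentEdges u, e ∈ G.incidentEdges u ∩ G.incidentEdges v :=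
      fun e he => ⟨he, by rw [← hφ, ← huv, hφ]; exact he⟩
    exact hab (subsingleton_incidentEdges_inter hne (mem_v a (hu ▸ Or.inl rfl))
      (mem_v b (hu ▸ Or.inr rfl)))
  have φ_surj : Function.Surjective φ := by
    rintro ⟨z, hz⟩
    induction z using Sym2.ind with
    | _ e e' =>
      obtain ⟨hne, v, hve, hve'⟩ := lineGraph_adj_iff_exists.mp (mem_edgeSet _ |>.mp hz)
      exact ⟨v, Subtype.ext <|
        (Sym2.mem_and_mem_iff hne).mp ⟨(hφ v e).mpr hve, (hφ v e').mpr hve'⟩⟩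
  refine ⟨⟨Equiv.ofBijective φ ⟨φ_inj, φ_surj⟩, ?_⟩⟩
  intro u v
  change G.lineGraph.lineGraph.Adj (φ u) (φ v) ↔ G.Adj u v
  rw [lineGraph_adj_iff_exists, φ_inj.ne_iff, adj_iff_exists_edge]
  simp only [hφ, mem_incidentEdges, Subtype.exists, exists_prop]

theorem nonempty_completeBipartiteGraph_iso_of_forall_mem_edge {v : V}
    (hv : ∀ e : G.edgeSet, v ∈ (e : Sym2 V)) (hG : ∀ u, ∃ w, G.Adj u w) :
    Nonempty (completeBipartiteGraph (Fin 1) (G.neighborSet v) ≃g G) := by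
  have eq_or_eq_of_adj : ∀ {x y}, G.Adj x y → v = x ∨ v = y := fun hxy =>
    Sym2.mem_iff.mp (hv ⟨s(_, _), hxy⟩)
  let φ : Fin 1 ⊕ G.neighborSet v → V := Sum.elim (fun _ => v) Subtype.val
  have φ_inj : Function.Injective φ := by
    rintro (i | ⟨x, hx⟩) (j | ⟨y, hy⟩) h
    · exact congrArg Sum.inl (Subsingleton.elim i j)
    · exact (hy.ne h).elim
    · exact (hx.ne h.symm).elim
    · exact congrArg Sum.inr (Subtype.ext h)
  have φ_surj : Function.Surjective φ := by
    intro u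
    by_cases huv : u = v
    · exact ⟨Sum.inl 0, huv.symm⟩
    obtain ⟨w, huw⟩ := hG u
    obtain rfl := (eq_or_eq_of_adj huw).resolve_left (Ne.symm huv)
    exact ⟨Sum.inr ⟨u, huw.symm⟩, rfl⟩
  refine ⟨⟨Equiv.ofBijective φ ⟨φ_inj, φ_surj⟩, ?_⟩⟩
  intro a b
  change G.Adj (φ a) (φ b) ↔ (completeBipartiteGraph _ _).Adj a b
  rcases a with i | ⟨x, hx⟩ <;> rcases b with j | ⟨y, hy⟩
  · simp [φ]
  · simpa [φ] using hy
  · simpa [φ] using hx.symm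
  · simp only [completeBipartiteGraph_adj, Sum.isLeft_inr, Sum.isRight_inr, φ, Sum.elim_inr]
    refine iff_of_false (fun hxy => ?_) (by simp)
    rcases eq_or_eq_of_adj hxy with rfl | rfl
    · exact hx.ne rfl
    · exact hy.ne rfl

theorem eq_three_of_lineGraph_iso_cycleGraph {n : ℕ} (f : G.lineGraph ≃g cycleGraph n) {v : V}
    (hv : 3 ≤ (G.incidentEdges v).encard) : n = 3 := by
  obtain ⟨t, hts, ht⟩ := Set.exists_subset_encard_eq hv
  obtain ⟨a, b, c, hab, hac, hbc, rfl⟩ := Set.encard_eq_three.mp ht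
  have hclique := (isClique_incidentEdges v).subset hts
  exact eq_three_of_cycleGraph_adj (f.map_adj_iff.mpr (hclique (by simp) (by simp) hab))
    (f.map_adj_iff.mpr (hclique (by simp) (by simp) hac))
    (f.map_adj_iff.mpr (hclique (by simp) (by simp) hbc))

theorem nonempty_iso_completeBipartiteGraph_of_edgeSet_equiv {k : ℕ} {v : V}
    (f : G.edgeSet ≃ Fin k) (hv : k ≤ (G.incidentEdges v).encard)
    (hG : ∀ u, ∃ w, G.Adj u w) :
    Nonempty (G ≃g completeBipartiteGraph (Fin 1) (Fin k)) := by
  classical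
  have : Finite G.edgeSet := .of_equiv _ f.symm
  have hv_univ : G.incidentEdges v = Set.univ :=
    (Set.toFinite _).eq_of_subset_of_encard_le' (Set.subset_univ _)
      (by simpa [ENat.card_congr f] using hv)
  have hv_mem : ∀ e : G.edgeSet, v ∈ (e : Sym2 V) := Set.eq_univ_iff_forall.mp hv_univ
  have hv_incidence : G.incidenceSet v = G.edgeSet :=
    Set.ext fun e => ⟨And.left, fun he => ⟨he, hv_mem ⟨e, he⟩⟩⟩
  obtain ⟨ψ⟩ := nonempty_completeBipartiteGraph_iso_of_forall_mem_edge hv_mem hG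
  exact ⟨ψ.symm.trans <| completeBipartiteGraphCongr (.refl _) <|
    (G.incidenceSetEquivNeighborSet v).symm.trans ((Equiv.setCongr hv_incidence).trans f)⟩

theorem lineGraph_iso_cycleGraph_cases {n : ℕ} (hn : 3 ≤ n) (f : G.lineGraph ≃g cycleGraph n)
    (hG : ∀ v, ∃ w, G.Adj v w) :
    Nonempty (G ≃g cycleGraph n) ∨
      n = 3 ∧ Nonempty (G ≃g completeBipartiteGraph (Fin 1) (Fin 3)) := by
  obtain ⟨m, rfl⟩ : ∃ m, n = m + 3 := ⟨n - 3, by omega⟩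
  by_cases h3 : ∃ v, 3 ≤ (G.incidentEdges v).encard
  · obtain ⟨v, hv⟩ := h3
    have hm := eq_three_of_lineGraph_iso_cycleGraph f hv
    obtain rfl : m = 0 := by omega
    exact .inr ⟨rfl, nonempty_iso_completeBipartiteGraph_of_edgeSet_equiv f.toEquiv hv hG⟩
  · simp only [not_exists, not_le] at h3
    have hL : ∀ e, ∃ a b, a ≠ b ∧ G.lineGraph.Adj e a ∧ G.lineGraph.Adj e b := by
      intro e
      obtain ⟨a, b, hab, ha, hb⟩ := exists_ne_adj_cycleGraph (f e)
      exact ⟨f.symm a, f.symm b, by simpa using hab, f.map_adj_iff.mp (by simpa using ha),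
        f.map_adj_iff.mp (by simpa using hb)⟩
    obtain ⟨φ⟩ := nonempty_iso_lineGraph_lineGraph (encard_incidentEdges_eq_two hL hG h3)
    exact .inl ⟨φ.trans (f.lineGraph.trans (cycleGraphIsoLineGraph m).symm)⟩

end SimpleGraph

/-- For every `n ≥ 3`, the cycle `C_n` is the only connected simple graph without isolated
vertices, other than possibly `K_{1,3}` when `n = 3`, whose line graph is isomorphic to `C_n`.
In particular, for `n = 5`: `C_5` is the only iso-free graph whose line graph is `C_5`. -/
theorem cycleGraph_unique_lineGraph :
    (∀ (n : ℕ), 3 ≤ n → ∀ {V : Type} (G : SimpleGraph V), G.Connected →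
      (∀ v, ∃ w, G.Adj v w) → Nonempty (G.lineGraph ≃g cycleGraph n) →
      Nonempty (G ≃g cycleGraph n) ∨
        (n = 3 ∧ Nonempty (G ≃g completeBipartiteGraph (Fin 1) (Fin 3)))) ∧
    (∀ {V : Type} (G : SimpleGraph V), (∀ v, ∃ w, G.Adj v w) →
      Nonempty (G.lineGraph ≃g cycleGraph 5) → Nonempty (G ≃g cycleGraph 5)) :=
  ⟨fun _ hn _ _ _ hG ⟨f⟩ => lineGraph_iso_cycleGraph_cases hn f hG,
    fun _ hG ⟨f⟩ => (lineGraph_iso_cycleGraph_cases (by norm_num) f hG).resolve_right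
      fun h => absurd h.1 (by norm_num)⟩
end

section
/- The graph K_5 minus an edge (the complete graph on 5 vertices with one edge removed) is not an induced subgraph of any line graph. -/
/-! The two non-adjacent vertices map to disjoint edges `e`, `f` of `G`. Each of the other three
vertices maps to an edge meeting both, i.e. to an edge `s(v, w)` with `v ∈ e` and `w ∈ f`, and two
such edges share a vertex only if they share `v` or `w`. Three distinct points of the `2 × 2` grid
of choices of `(v, w)` cannot pairwise agree in a coordinate, so these three edges cannot pairwise
meet. -/

open SimpleGraph

namespace Sym2

variable {α : Type*}

theorem exists_eq_mk_of_inter_nonempty {e f g : Sym2 α} (hef : ∀ x ∈ e, x ∉ f)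
    (hge : ∃ v, v ∈ g ∧ v ∈ e) (hgf : ∃ w, w ∈ g ∧ w ∈ f) :
    ∃ v ∈ e, ∃ w ∈ f, g = s(v, w) := by
  obtain ⟨v, hvg, hve⟩ := hge
  obtain ⟨w, hwg, hwf⟩ := hgf
  have hvw : v ≠ w := by rintro rfl; exact hef v hve hwf
  exact ⟨v, hve, w, hwf, (mem_and_mem_iff hvw).mp ⟨hvg, hwg⟩⟩

theorem eq_or_eq_of_mk_inter_nonempty {e f : Sym2 α} (hef : ∀ x ∈ e, x ∉ f) {v v' w w' : α}
    (hv : v ∈ e) (hv' : v' ∈ e) (hw : w ∈ f) (hw' : w' ∈ f)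
    (h : ∃ u, u ∈ s(v, w) ∧ u ∈ s(v', w')) : v = v' ∨ w = w' := by
  obtain ⟨u, hu, hu'⟩ := h
  rw [mem_iff] at hu hu'
  rcases hu with rfl | rfl <;> rcases hu' with rfl | rfl
  · exact .inl rfl
  · exact absurd hw' (hef u hv)
  · exact absurd hw (hef u hv')
  · exact .inr rfl

theorem not_pairwise_eq_or_eq {e f : Sym2 α} {v₁ v₂ v₃ w₁ w₂ w₃ : α}
    (hv₁ : v₁ ∈ e) (hv₂ : v₂ ∈ e) (hv₃ : v₃ ∈ e) (hw₁ : w₁ ∈ f) (hw₂ : w₂ ∈ f) (hw₃ : w₃ ∈ f)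
    (h₁₂ : (v₁, w₁) ≠ (v₂, w₂)) (h₁₃ : (v₁, w₁) ≠ (v₃, w₃)) (h₂₃ : (v₂, w₂) ≠ (v₃, w₃)) :
    ¬ ((v₁ = v₂ ∨ w₁ = w₂) ∧ (v₁ = v₃ ∨ w₁ = w₃) ∧ (v₂ = v₃ ∨ w₂ = w₃)) := by
  induction e using Sym2.ind
  induction f using Sym2.ind
  simp only [mem_iff] at *
  grind

end Sym2

namespace SimpleGraph

variable {V : Type*} {G : SimpleGraph V}

theorem lineGraph_not_triangle_of_mem_commonNeighbors {e f g₁ g₂ g₃ : G.edgeSet} (hef : e ≠ f)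
    (hnadj : ¬ G.lineGraph.Adj e f) (hg₁ : g₁ ∈ G.lineGraph.commonNeighbors e f)
    (hg₂ : g₂ ∈ G.lineGraph.commonNeighbors e f) (hg₃ : g₃ ∈ G.lineGraph.commonNeighbors e f) :
    ¬ (G.lineGraph.Adj g₁ g₂ ∧ G.lineGraph.Adj g₁ g₃ ∧ G.lineGraph.Adj g₂ g₃) := by
  have hdisj : ∀ x ∈ (e : Sym2 V), x ∉ (f : Sym2 V) := fun x hxe hxf =>
    hnadj (lineGraph_adj_iff_exists.mpr ⟨hef, x, hxe, hxf⟩)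
  have transversal {g : G.edgeSet} (hg : g ∈ G.lineGraph.commonNeighbors e f) :
      ∃ v ∈ (e : Sym2 V), ∃ w ∈ (f : Sym2 V), (g : Sym2 V) = s(v, w) :=
    Sym2.exists_eq_mk_of_inter_nonempty hdisj (lineGraph_adj_iff_exists.mp hg.1.symm).2
      (lineGraph_adj_iff_exists.mp hg.2.symm).2
  obtain ⟨v₁, hv₁, w₁, hw₁, he₁⟩ := transversal hg₁
  obtain ⟨v₂, hv₂, w₂, hw₂, he₂⟩ := transversal hg₂
  obtain ⟨v₃, hv₃, w₃, hw₃, he₃⟩ := transversal hg₃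
  have ends_ne {g g' : G.edgeSet} {v v' w w' : V} (hadj : G.lineGraph.Adj g g')
      (hg : (g : Sym2 V) = s(v, w)) (hg' : (g' : Sym2 V) = s(v', w')) : (v, w) ≠ (v', w') := by
    rintro ⟨⟩
    exact hadj.ne (Subtype.ext (hg.trans hg'.symm))
  have ends_eq {g g' : G.edgeSet} {v v' w w' : V} (hv : v ∈ (e : Sym2 V)) (hv' : v' ∈ (e : Sym2 V))
      (hw : w ∈ (f : Sym2 V)) (hw' : w' ∈ (f : Sym2 V)) (hadj : G.lineGraph.Adj g g')
      (hg : (g : Sym2 V) = s(v, w)) (hg' : (g' : Sym2 V) = s(v', w')) : v = v' ∨ w = w' :=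
    Sym2.eq_or_eq_of_mk_inter_nonempty hdisj hv hv' hw hw' <|
      hg ▸ hg' ▸ (lineGraph_adj_iff_exists.mp hadj).2
  rintro ⟨h₁₂, h₁₃, h₂₃⟩
  exact Sym2.not_pairwise_eq_or_eq hv₁ hv₂ hv₃ hw₁ hw₂ hw₃ (ends_ne h₁₂ he₁ he₂)
    (ends_ne h₁₃ he₁ he₃) (ends_ne h₂₃ he₂ he₃)
    ⟨ends_eq hv₁ hv₂ hw₁ hw₂ h₁₂ he₁ he₂, ends_eq hv₁ hv₃ hw₁ hw₃ h₁₃ he₁ he₃,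
      ends_eq hv₂ hv₃ hw₂ hw₃ h₂₃ he₂ he₃⟩

end SimpleGraph

/-- `K_5` minus an edge is not an induced subgraph of any line graph. -/
theorem K5_minus_edge_not_induced_in_lineGraph {V : Type} (G : SimpleGraph V) :
    IsEmpty (((⊤ : SimpleGraph (Fin 5)).deleteEdges {s(0, 1)}) ↪g G.lineGraph) := by
  refine ⟨fun φ => ?_⟩
  have adj {i j : Fin 5} (hij : i ≠ j) (h01 : s(i, j) ≠ s(0, 1)) : G.lineGraph.Adj (φ i) (φ j) :=
    φ.map_adj_iff.mpr (by simp [deleteEdges_adj, hij, h01])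
  have common {i : Fin 5} (hi0 : i ≠ 0) (hi1 : i ≠ 1) :
      φ i ∈ G.lineGraph.commonNeighbors (φ 0) (φ 1) :=
    ⟨adj hi0.symm (by simp [hi0, hi1]), adj hi1.symm (by simp [hi0, hi1])⟩
  exact lineGraph_not_triangle_of_mem_commonNeighbors (φ.injective.ne (by decide))
    (by simp [deleteEdges_adj]) (common (i := 2) (by decide) (by decide))
    (common (i := 3) (by decide) (by decide)) (common (i := 4) (by decide) (by decide))
    ⟨adj (by decide) (by decide), adj (by decide) (by decide), adj (by decide) (by decide)⟩
end

section
/- For every bipartite simple graph G, the chromatic index χ'(G) equals the maximum degree Δ(G) (König's edge colouring theorem), and hence every edge-induced subgraph H of a bipartite graph satisfies χ'(H) = ω(L(H)) whenever Δ(H) ≠ 2 or H is triangle-free; in particular, every bipartite graph is line perfect. -/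
open SimpleGraph

/-- A graph is perfect if every induced subgraph has chromatic number equal to its
clique number. -/
def SimpleGraph.IsPerfect {V : Type*} (H : SimpleGraph V) : Prop :=
  ∀ s : Set V, (H.induce s).chromaticNumber = ((H.induce s).cliqueNum : ℕ∞)

/-!
König's theorem is proved by adding the edges one at a time, using colours `0, …, Δ - 1`. When
`uv` is added, some colour `a` is missing at `u` and some colour `b` at `v`. Interchanging `a` and
`b` on the component of `u` in the subgraph of `a`- and `b`-coloured edges frees `b` at `u`, and
this component does not contain `v`: a path from `u` to `v` in it would start with a `b`-edge,
alternate, and end with an `a`-edge, so it would have even length, whereas `u` and `v` lie on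
opposite sides of the bipartition. Hence `χ(L(G)) ≤ Δ(G)`; the edges at a vertex of maximum degree
form a clique of `L(G)`, so `Δ(G) ≤ ω(L(G)) ≤ χ(L(G))`. Line perfection follows because the
subgraph of `L(G)` induced by a set of edges is the line graph of the (bipartite) subgraph of `G`
formed by these edges.
-/

namespace SimpleGraph

variable {V κ : Type*} {G : SimpleGraph V}

variable (G) in
def IsEdgeColoring (c : Sym2 V → κ) : Prop :=
  ∀ ⦃x y z⦄, G.Adj x y → G.Adj x z → y ≠ z → c s(x, y) ≠ c s(x, z)

variable (G) in
def MissesColor (c : Sym2 V → κ) (x : V) (a : κ) : Prop :=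
  ∀ ⦃y⦄, G.Adj x y → c s(x, y) ≠ a

theorem exists_lt_missesColor [Finite V] (c : Sym2 V → ℕ) {x : V} {D : ℕ}
    (hx : (G.neighborSet x).ncard < D) : ∃ a < D, G.MissesColor c x a := by
  have hcard : ((fun y ↦ c s(x, y)) '' G.neighborSet x).ncard < (Set.Iio D).ncard := by
    rw [Set.ncard_Iio_nat]
    exact (Set.ncard_image_le).trans_lt hx
  obtain ⟨a, ha, hmiss⟩ := Set.exists_mem_notMem_of_ncard_lt_ncard hcard
  exact ⟨a, ha, fun y hy hya ↦ hmiss ⟨y, hy, hya⟩⟩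

theorem IsEdgeColoring.update [DecidableEq V] {c : Sym2 V → κ} {u v : V} {a : κ}
    (hc : (G.deleteEdges {s(u, v)}).IsEdgeColoring c)
    (hu : (G.deleteEdges {s(u, v)}).MissesColor c u a)
    (hv : (G.deleteEdges {s(u, v)}).MissesColor c v a) :
    G.IsEdgeColoring (Function.update c s(u, v) a) := by
  have hdel : ∀ ⦃x y⦄, G.Adj x y → s(x, y) ≠ s(u, v) → (G.deleteEdges {s(u, v)}).Adj x y :=
    fun x y h hne ↦ deleteEdges_adj.2 ⟨h, hne⟩
  have hnew : ∀ ⦃x y z⦄, G.Adj x z → s(x, z) ≠ s(u, v) → s(x, y) = s(u, v) → c s(x, z) ≠ a := by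
    intro x y z hxz hz hy
    rcases Sym2.eq_iff.1 hy with ⟨rfl, -⟩ | ⟨rfl, -⟩
    · exact hu (hdel hxz hz)
    · exact hv (hdel hxz hz)
  intro x y z hxy hxz hyz
  simp only [Function.update_apply]
  split_ifs with hy hz hz
  · exact absurd (Sym2.congr_right.1 (hy.trans hz.symm)) hyz
  · exact (hnew hxz hz hy).symm
  · exact hnew hxy hy hz
  · exact hc (hdel hxy hy) (hdel hxz hz) hyz

variable (G) in
def kempeGraph (c : Sym2 V → κ) (a b : κ) : SimpleGraph V where
  Adj x y := G.Adj x y ∧ (c s(x, y) = a ∨ c s(x, y) = b)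
  symm := ⟨fun x y h ↦ by rwa [G.adj_comm, Sym2.eq_swap]⟩
  loopless := ⟨fun x h ↦ G.loopless.irrefl x h.1⟩

theorem kempeGraph_le (c : Sym2 V → κ) (a b : κ) : G.kempeGraph c a b ≤ G :=
  fun _ _ h ↦ h.1

open Classical in
noncomputable def kempeSwap [DecidableEq κ] (c : Sym2 V → κ) (a b : κ) (K : Set V) :
    Sym2 V → κ :=
  fun e ↦ if ∃ x ∈ e, x ∈ K then Equiv.swap a b (c e) else c e

section kempeSwap

variable [DecidableEq κ] {c : Sym2 V → κ} {a b : κ} {K : Set V}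

theorem kempeSwap_eq_or (e : Sym2 V) :
    kempeSwap c a b K e = c e ∨ kempeSwap c a b K e = Equiv.swap a b (c e) := by
  unfold kempeSwap
  split_ifs <;> simp

theorem kempeSwap_of_notMem (hK : ∀ ⦃x y⦄, x ∈ K → (G.kempeGraph c a b).Adj x y → y ∈ K)
    {x y : V} (hx : x ∉ K) (hxy : G.Adj x y) : kempeSwap c a b K s(x, y) = c s(x, y) := by
  unfold kempeSwap
  split_ifs with hmeet
  · have hy : y ∈ K := by simpa [hx] using hmeet
    refine Equiv.swap_apply_of_ne_of_ne (fun ha ↦ hx ?_) (fun hb ↦ hx ?_)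
    · exact hK hy ⟨hxy.symm, Or.inl (by rwa [Sym2.eq_swap])⟩
    · exact hK hy ⟨hxy.symm, Or.inr (by rwa [Sym2.eq_swap])⟩
  · rfl

theorem kempeSwap_of_mem {x y : V} (hx : x ∈ K) :
    kempeSwap c a b K s(x, y) = Equiv.swap a b (c s(x, y)) :=
  if_pos ⟨x, Sym2.mem_mk_left x y, hx⟩

theorem IsEdgeColoring.kempeSwap (hK : ∀ ⦃x y⦄, x ∈ K → (G.kempeGraph c a b).Adj x y → y ∈ K)
    (hc : G.IsEdgeColoring c) : G.IsEdgeColoring (kempeSwap c a b K) := by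
  intro x y z hxy hxz hyz
  by_cases hx : x ∈ K
  · rw [kempeSwap_of_mem hx, kempeSwap_of_mem hx]
    exact (Equiv.injective _).ne (hc hxy hxz hyz)
  · rw [kempeSwap_of_notMem hK hx hxy, kempeSwap_of_notMem hK hx hxz]
    exact hc hxy hxz hyz

end kempeSwap

theorem IsEdgeColoring.color_snd_eq_iff_even_length {c : Sym2 V → κ} {a b : κ}
    (hc : G.IsEdgeColoring c) {x y : V} (hy : G.MissesColor c y b)
    (p : (G.kempeGraph c a b).Walk x y) (hp : p.IsPath) (hnil : ¬ p.Nil) :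
    c s(x, p.snd) = b ↔ Even p.length := by
  induction p with
  | nil => exact absurd Walk.Nil.nil hnil
  | @cons x x₁ y hx q ih =>
    rw [Walk.snd_cons, Walk.length_cons, Nat.even_add_one]
    cases q with
    | nil => simpa [Sym2.eq_swap] using hy hx.1.symm
    | @cons _ x₂ _ hx₁ q =>
      have hx₂ : x ≠ x₂ := fun h ↦ ((Walk.cons_isPath_iff _ _).1 hp).2 (by simp [h])
      have hne : c s(x₁, x) ≠ c s(x₁, x₂) := hc hx.1.symm hx₁.1 hx₂
      have hcol : c s(x₁, x) = a ∨ c s(x₁, x) = b := Sym2.eq_swap (a := x) ▸ hx.2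
      rw [← ih hy hp.of_cons Walk.not_nil_cons, Walk.snd_cons, Sym2.eq_swap (a := x)]
      refine ⟨fun h h' ↦ hne (h.trans h'.symm), fun h ↦ hcol.resolve_left fun h₁ ↦ ?_⟩
      exact hne (h₁.trans (hx₁.2.resolve_right h).symm)

theorem IsEdgeColoring.not_reachable_kempeGraph {c : Sym2 V → κ} {a b : κ}
    (hc : G.IsEdgeColoring c) (C : G.Coloring Bool) {u v : V} (huv : C u ≠ C v)
    (hu : G.MissesColor c u a) (hv : G.MissesColor c v b) :
    ¬ (G.kempeGraph c a b).Reachable u v := by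
  intro hreach
  obtain ⟨p, hp⟩ := hreach.exists_isPath
  have hnil : ¬ p.Nil := fun h ↦ huv (congrArg C h.eq)
  have hsnd := p.adj_snd hnil
  have heven : Even p.length :=
    (hc.color_snd_eq_iff_even_length hv p hp hnil).1 (hsnd.2.resolve_left (hu hsnd.1))
  have hC : C u ↔ C v :=
    (Coloring.even_length_iff_congr (C.comp (Hom.ofLE (kempeGraph_le c a b))) p).1 heven
  exact huv (Bool.eq_iff_iff.2 hC)

theorem IsBipartite.exists_isEdgeColoring_of_deleteEdges [Finite V] (hG : G.IsBipartite) {D : ℕ}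
    (hD : ∀ x, (G.neighborSet x).ncard ≤ D) {u v : V} (huv : G.Adj u v) {c : Sym2 V → ℕ}
    (hc : (G.deleteEdges {s(u, v)}).IsEdgeColoring c)
    (hcD : ∀ e ∈ (G.deleteEdges {s(u, v)}).edgeSet, c e < D) :
    ∃ c' : Sym2 V → ℕ, G.IsEdgeColoring c' ∧ ∀ e ∈ G.edgeSet, c' e < D := by
  classical
  set G' := G.deleteEdges {s(u, v)}
  have hdeg : ∀ ⦃x y⦄, G.Adj x y → s(x, y) = s(u, v) → (G'.neighborSet x).ncard < D := by
    intro x y hxy he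
    refine (Set.ncard_lt_ncard ⟨fun z hz ↦ deleteEdges_le _ hz, fun hsub ↦ ?_⟩).trans_le (hD x)
    exact (deleteEdges_adj.1 (hsub hxy)).2 he
  obtain ⟨a, ha, hua⟩ := exists_lt_missesColor c (hdeg huv rfl)
  obtain ⟨b, hb, hvb⟩ := exists_lt_missesColor c (hdeg huv.symm Sym2.eq_swap)
  set K := {x | (G'.kempeGraph c a b).Reachable u x}
  have hK : ∀ ⦃x y⦄, x ∈ K → (G'.kempeGraph c a b).Adj x y → y ∈ K :=
    fun _ _ hx hxy ↦ Reachable.trans hx hxy.reachable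
  have hvK : v ∉ K := by
    let C := recolorOfEquiv G finTwoEquiv hG.some
    exact hc.not_reachable_kempeGraph (C.comp (Hom.ofLE (deleteEdges_le _))) (C.valid huv) hua hvb
  refine ⟨Function.update (kempeSwap c a b K) s(u, v) b, (hc.kempeSwap hK).update ?_ ?_, ?_⟩
  · intro y hy
    rw [kempeSwap_of_mem (show u ∈ K from Reachable.refl u), Ne, Equiv.swap_apply_eq_iff,
      Equiv.swap_apply_right]
    exact hua hy
  · intro y hy
    rw [kempeSwap_of_notMem hK hvK hy]
    exact hvb hy
  · intro e he
    rw [Function.update_apply]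
    split_ifs with he'
    · exact hb
    have he₁ : c e < D := hcD e (by simp [G', edgeSet_deleteEdges, he, he'])
    rcases kempeSwap_eq_or (c := c) (a := a) (b := b) (K := K) e with h | h <;> rw [h]
    · exact he₁
    · rw [Equiv.swap_apply_def]
      split_ifs <;> assumption

-- Colours are natural numbers below `D` rather than elements of `Fin D`, because
-- `Sym2 V → Fin 0` is empty as soon as `V` is nonempty.
theorem IsBipartite.exists_isEdgeColoring [Finite V] (hG : G.IsBipartite) {D : ℕ}
    (hD : ∀ x, (G.neighborSet x).ncard ≤ D) :
    ∃ c : Sym2 V → ℕ, G.IsEdgeColoring c ∧ ∀ e ∈ G.edgeSet, c e < D := by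
  induction hn : G.edgeSet.ncard generalizing G with
  | zero =>
    obtain rfl : G = ⊥ := edgeSet_eq_empty.1 ((Set.ncard_eq_zero (Set.toFinite _)).1 hn)
    exact ⟨0, fun _ _ _ h ↦ h.elim, fun e he ↦ by simp at he⟩
  | succ n ih =>
    obtain ⟨e, he⟩ := Set.nonempty_of_ncard_ne_zero (s := G.edgeSet) (by omega)
    induction e using Sym2.ind with | h u v => ?_
    obtain ⟨c, hc, hcD⟩ := ih (hG.mono_left (deleteEdges_le _))
      (fun x ↦ (Set.ncard_le_ncard (neighborSet_mono (deleteEdges_le _) x)).trans (hD x))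
      (by rw [edgeSet_deleteEdges, Set.ncard_sdiff_singleton_of_mem he, hn]; rfl)
    exact hG.exists_isEdgeColoring_of_deleteEdges hD he hc hcD

theorem IsBipartite.lineGraph_colorable [Fintype V] [DecidableRel G.Adj] (hG : G.IsBipartite) :
    G.lineGraph.Colorable G.maxDegree := by
  obtain ⟨c, hc, hcD⟩ := hG.exists_isEdgeColoring (D := G.maxDegree) fun x ↦ by
    rw [← Nat.card_coe_set_eq, Nat.card_eq_fintype_card, card_neighborSet_eq_degree]
    exact G.degree_le_maxDegree x
  refine ⟨Coloring.mk (fun e ↦ ⟨c e, hcD e e.2⟩) fun {e f} hef ↦ ?_⟩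
  obtain ⟨hne, x, hxe, hxf⟩ := lineGraph_adj_iff_exists.1 hef
  obtain ⟨y, hy⟩ := Sym2.mem_iff_exists.1 hxe
  obtain ⟨z, hz⟩ := Sym2.mem_iff_exists.1 hxf
  have hyz : y ≠ z := fun h ↦ hne (Subtype.ext (by rw [hy, hz, h]))
  have hxy : G.Adj x y := by rw [← mem_edgeSet, ← hy]; exact e.2
  have hxz : G.Adj x z := by rw [← mem_edgeSet, ← hz]; exact f.2
  simpa [hy, hz] using hc hxy hxz hyz

theorem degree_le_cliqueNum_lineGraph [Fintype V] [DecidableRel G.Adj] (x : V) :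
    G.degree x ≤ G.lineGraph.cliqueNum := by
  classical
  let t : Finset G.edgeSet := (G.incidenceFinset x).subtype (· ∈ G.edgeSet)
  have ht : G.lineGraph.IsClique (t : Set G.edgeSet) := by
    intro e he f hf hef
    simp only [t, Finset.mem_coe, Finset.mem_subtype, mem_incidenceFinset] at he hf
    exact lineGraph_adj_iff_exists.2 ⟨hef, x, he.2, hf.2⟩
  have hcard : t.card = G.degree x := by
    rw [Finset.card_subtype, Finset.filter_true_of_mem fun e he ↦
      ((G.mem_incidenceFinset x e).1 he).1, card_incidenceFinset_eq_degree]
  exact hcard ▸ ht.card_le_cliqueNum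

theorem maxDegree_le_cliqueNum_lineGraph [Fintype V] [DecidableRel G.Adj] :
    G.maxDegree ≤ G.lineGraph.cliqueNum :=
  G.maxDegree_le_of_forall_degree_le _ G.degree_le_cliqueNum_lineGraph

theorem IsBipartite.chromaticNumber_lineGraph [Fintype V] [DecidableRel G.Adj]
    (hG : G.IsBipartite) : G.lineGraph.chromaticNumber = G.maxDegree :=
  le_antisymm hG.lineGraph_colorable.chromaticNumber_le
    ((Nat.cast_le.2 G.maxDegree_le_cliqueNum_lineGraph).trans
      G.lineGraph.cliqueNum_le_chromaticNumber)

theorem IsBipartite.cliqueNum_lineGraph [Fintype V] [DecidableRel G.Adj]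
    (hG : G.IsBipartite) : G.lineGraph.cliqueNum = G.maxDegree := by
  refine le_antisymm ?_ G.maxDegree_le_cliqueNum_lineGraph
  exact_mod_cast hG.chromaticNumber_lineGraph ▸ G.lineGraph.cliqueNum_le_chromaticNumber

theorem Embedding.cliqueNum_le {W : Type*} [Finite W] {H : SimpleGraph W} (f : G ↪g H) :
    G.cliqueNum ≤ H.cliqueNum := by
  obtain ⟨t, ht⟩ := G.exists_isNClique_cliqueNum
  have hle : G.map f.toEmbedding ≤ H :=
    (map_le_iff_le_comap _ _ _).2 fun _ _ h ↦ f.map_adj_iff.2 h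
  have hH := (ht.map (f := f.toEmbedding)).mono hle
  exact hH.card_eq ▸ hH.isClique.card_le_cliqueNum

theorem Iso.cliqueNum_eq [Finite V] {W : Type*} [Finite W] {H : SimpleGraph W} (f : G ≃g H) :
    G.cliqueNum = H.cliqueNum :=
  le_antisymm f.toEmbedding.cliqueNum_le f.symm.toEmbedding.cliqueNum_le

theorem mem_edgeSet_fromEdgeSet_image_val {s : Set G.edgeSet} {e : Sym2 V} :
    e ∈ (fromEdgeSet (Subtype.val '' s)).edgeSet ↔ ∃ h : e ∈ G.edgeSet, ⟨e, h⟩ ∈ s := by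
  rw [edgeSet_fromEdgeSet]
  constructor
  · rintro ⟨⟨e, he, rfl⟩, -⟩
    exact ⟨e.2, he⟩
  · rintro ⟨h, he⟩
    exact ⟨⟨_, he, rfl⟩, G.not_isDiag_of_mem_edgeSet h⟩

def induceLineGraphIso (s : Set G.edgeSet) :
    G.lineGraph.induce s ≃g (fromEdgeSet (Subtype.val '' s)).lineGraph where
  toFun e := ⟨e.1.1, mem_edgeSet_fromEdgeSet_image_val.2 ⟨e.1.2, e.2⟩⟩
  invFun e :=
    ⟨⟨e.1, (mem_edgeSet_fromEdgeSet_image_val.1 e.2).1⟩,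
      (mem_edgeSet_fromEdgeSet_image_val.1 e.2).2⟩
  map_rel_iff' := by simp [lineGraph_adj_iff_exists]

end SimpleGraph

/-- König's edge colouring theorem and its consequence: for bipartite `G` the chromatic
index equals the maximum degree, every edge-induced (i.e. spanning) subgraph `H` with
`Δ(H) ≠ 2` or `H` triangle-free satisfies `χ'(H) = ω(L(H))`, and `G` is line perfect. -/
theorem bipartite_linePerfect {V : Type} [Fintype V] (G : SimpleGraph V)
    [DecidableRel G.Adj] (hbip : G.Colorable 2) :
    G.lineGraph.chromaticNumber = (G.maxDegree : ℕ∞) ∧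
    (∀ (H : SimpleGraph V) [DecidableRel H.Adj], H ≤ G →
      (H.maxDegree ≠ 2 ∨ H.CliqueFree 3) →
      H.lineGraph.chromaticNumber = (H.lineGraph.cliqueNum : ℕ∞)) ∧
    G.lineGraph.IsPerfect := by
  have hsub : ∀ (H : SimpleGraph V) [DecidableRel H.Adj], H ≤ G →
      H.lineGraph.chromaticNumber = (H.lineGraph.cliqueNum : ℕ∞) := fun H _ hHG ↦ by
    have hH : H.IsBipartite := hbip.mono_left hHG
    rw [hH.chromaticNumber_lineGraph, hH.cliqueNum_lineGraph]
  refine ⟨IsBipartite.chromaticNumber_lineGraph hbip, fun H _ hHG _ ↦ hsub H hHG, fun s ↦ ?_⟩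
  classical
  let φ := G.induceLineGraphIso s
  rw [chromaticNumber_congr φ, φ.cliqueNum_eq]
  exact hsub _ ((fromEdgeSet_le G).2 fun _ ⟨⟨e, _, he⟩, _⟩ ↦ he ▸ e.2)
end

section
/- If a connected simple graph G contains the complete graph K_4 as a subgraph and contains neither a path P_6 on 6 vertices nor a cycle C_5 as a subgraph, then there is a vertex v of the K_4 such that every edge of G not belonging to the K_4 is incident to v (i.e., G is a 'tetrahedron of flowers': a K_4 with pendant edges attached at a single vertex). -/
/-! Let `s` be the vertex set of the `K₄`. If `x ∉ s` is adjacent to `v ∈ s`, every neighbour of `x`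
lies in `s`: a neighbour `y ∉ s` would extend a Hamiltonian path of the `K₄` ending at `v` to a `P₆`.
By connectedness, every vertex outside `s` is therefore adjacent to `s`. Vertices `x, y ∉ s`
hanging at different vertices `v ≠ w` of `s` give the path `x v a b w y` through the two remaining
vertices `a, b` of the `K₄`, a `P₆` if `x ≠ y` and a `C₅` if `x = y`. So all vertices outside `s`
are leaves attached to one common vertex of `s`. -/

open SimpleGraph

/-- `G` contains `H` as a (not necessarily induced) subgraph. -/
def ContainsSub {V W : Type*} (G : SimpleGraph V) (H : SimpleGraph W) : Prop :=
  ∃ f : W → V, Function.Injective f ∧ ∀ a b, H.Adj a b → G.Adj (f a) (f b)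

theorem Fin.val_eq_succ_or_of_val_sub_eq_one {n : ℕ} {a b : Fin n} (h : (b - a).val = 1) :
    b.val = a.val + 1 ∨ (b.val = 0 ∧ a.val + 1 = n) := by
  rcases le_or_gt a b with hab | hab
  · rw [Fin.sub_val_of_le hab] at h; omega
  · rw [Fin.coe_sub_iff_lt.mpr hab] at h; omega

namespace SimpleGraph

variable {V : Type*} {G : SimpleGraph V}

theorem containsSub_pathGraph {l : List V} (hl : l.Nodup) (h : l.IsChain G.Adj) :
    ContainsSub G (pathGraph l.length) := by
  refine ⟨l.get, hl.injective_get, fun a b hab => ?_⟩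
  rw [List.isChain_iff_getElem] at h
  rcases pathGraph_adj.mp hab with hab | hab
  · simpa [← hab] using h a (by omega)
  · simpa [← hab] using (h b (by omega)).symm

theorem containsSub_cycleGraph {l : List V} (hl : l.Nodup) (h : l.IsChain G.Adj)
    (hclose : ∀ u ∈ l.getLast?, ∀ w ∈ l.head?, G.Adj u w) :
    ContainsSub G (cycleGraph l.length) := by
  have hstep : ∀ a b : Fin l.length, (b - a).val = 1 → G.Adj (l.get a) (l.get b) := by
    intro a b hab
    rcases Fin.val_eq_succ_or_of_val_sub_eq_one hab with hab | ⟨hb, ha⟩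
    · simpa [← hab] using List.isChain_iff_getElem.mp h a (by omega)
    · apply hclose <;> simp [List.getLast?_eq_getElem?, List.head?_eq_getElem?, hb, ← ha]
  refine ⟨l.get, hl.injective_get, fun a b hab => ?_⟩
  rcases cycleGraph_adj'.mp hab with hab | hab
  · exact (hstep b a hab).symm
  · exact hstep a b hab

section FourClique

variable [DecidableEq V] {s : Finset V} {v w x y : V}

theorem IsNClique.exists_other_pair_of_four (hs : G.IsNClique 4 s) (hv : v ∈ s) (hw : w ∈ s)
    (hvw : v ≠ w) :
    ∃ a ∈ s, ∃ b ∈ s, G.Adj v a ∧ G.Adj v b ∧ G.Adj a b ∧ G.Adj a w ∧ G.Adj b w := by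
  obtain ⟨a, b, hab, hrest⟩ := Finset.card_eq_two.mp
    ((hs.erase_of_mem hv).erase_of_mem (Finset.mem_erase.mpr ⟨hvw.symm, hw⟩)).card_eq
  have ha : a ∈ (s.erase v).erase w := by simp [hrest]
  have hb : b ∈ (s.erase v).erase w := by simp [hrest]
  simp only [Finset.mem_erase] at ha hb
  exact ⟨a, ha.2.2, b, hb.2.2, hs.1 hv ha.2.2 (Ne.symm ha.2.1), hs.1 hv hb.2.2 (Ne.symm hb.2.1),
    hs.1 ha.2.2 hb.2.2 hab, hs.1 ha.2.2 hw ha.1, hs.1 hb.2.2 hw hb.1⟩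

theorem IsNClique.mem_of_adj_of_adj_of_notMem (hs : G.IsNClique 4 s)
    (hP6 : ¬ ContainsSub G (pathGraph 6)) (hv : v ∈ s) (hx : x ∉ s) (hvx : G.Adj v x)
    (hxy : G.Adj x y) : y ∈ s := by
  by_contra hy
  obtain ⟨w, hw, hwv⟩ := s.exists_mem_ne (by simp [hs.card_eq]) v
  obtain ⟨a, ha, b, hb, hwa, hwb, hab, hav, hbv⟩ := hs.exists_other_pair_of_four hw hv hwv
  exact hP6 <| containsSub_pathGraph (l := [w, b, a, v, x, y]) (by aesop) (by simp [*, hab.symm])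

theorem IsNClique.exists_adj_of_notMem (hs : G.IsNClique 4 s)
    (hP6 : ¬ ContainsSub G (pathGraph 6)) (hc : G.Preconnected) (hx : x ∉ s) :
    ∃ v ∈ s, G.Adj v x := by
  obtain ⟨u, hu⟩ : s.Nonempty := Finset.card_pos.mp (by simp [hs.card_eq])
  suffices h : ∀ {z w : V}, G.Walk z w → (z ∈ s ∨ ∃ v ∈ s, G.Adj v z) →
      (w ∈ s ∨ ∃ v ∈ s, G.Adj v w) from
    (h (hc u x).some (.inl hu)).resolve_left hx
  intro z w p
  induction p with
  | nil => exact id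
  | @cons z t w hzt _ ih =>
    rintro (hz | ⟨v, hv, hvz⟩)
    · exact ih (.inr ⟨z, hz, hzt⟩)
    · by_cases hz : z ∈ s
      · exact ih (.inr ⟨z, hz, hzt⟩)
      · exact ih (.inl (hs.mem_of_adj_of_adj_of_notMem hP6 hv hz hvz hzt))

theorem IsNClique.eq_of_adj_of_adj_of_notMem (hs : G.IsNClique 4 s)
    (hP6 : ¬ ContainsSub G (pathGraph 6)) (hC5 : ¬ ContainsSub G (cycleGraph 5))
    (hv : v ∈ s) (hw : w ∈ s) (hx : x ∉ s) (hy : y ∉ s) (hvx : G.Adj v x) (hwy : G.Adj w y) :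
    v = w := by
  by_contra hvw
  obtain ⟨a, ha, b, hb, hva, hvb, hab, haw, hbw⟩ := hs.exists_other_pair_of_four hv hw hvw
  by_cases hxy : x = y
  · subst hxy
    exact hC5 <| containsSub_cycleGraph (l := [x, v, a, b, w]) (by aesop)
      (by simp [*, hvx.symm]) (by simpa using hwy)
  · exact hP6 <| containsSub_pathGraph (l := [x, v, a, b, w, y]) (by aesop)
      (by simp [*, hvx.symm])

theorem IsNClique.exists_forall_neighborSet_eq_singleton (hs : G.IsNClique 4 s)
    (hP6 : ¬ ContainsSub G (pathGraph 6)) (hC5 : ¬ ContainsSub G (cycleGraph 5))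
    (hc : G.Preconnected) :
    ∃ v ∈ s, ∀ x ∉ s, G.neighborSet x = {v} := by
  by_cases hout : ∀ x, x ∈ s
  · obtain ⟨v, hv⟩ : s.Nonempty := Finset.card_pos.mp (by simp [hs.card_eq])
    exact ⟨v, hv, fun x hx => absurd (hout x) hx⟩
  obtain ⟨x₀, hx₀⟩ := not_forall.mp hout
  obtain ⟨v, hv, hvx₀⟩ := hs.exists_adj_of_notMem hP6 hc hx₀
  refine ⟨v, hv, fun x hx => Set.eq_singleton_iff_unique_mem.mpr ⟨?_, fun y hxy => ?_⟩⟩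
  · obtain ⟨w, hw, hwx⟩ := hs.exists_adj_of_notMem hP6 hc hx
    rw [hs.eq_of_adj_of_adj_of_notMem hP6 hC5 hw hv hx hx₀ hwx hvx₀] at hwx
    exact hwx.symm
  · obtain ⟨w, hw, hwx⟩ := hs.exists_adj_of_notMem hP6 hc hx
    have hy : y ∈ s := hs.mem_of_adj_of_adj_of_notMem hP6 hw hx hwx hxy
    exact hs.eq_of_adj_of_adj_of_notMem hP6 hC5 hy hv hx hx₀ hxy.symm hvx₀

end FourClique

end SimpleGraph

/-- If a connected graph contains `K_4` but no `P_6` and no `C_5` as subgraphs,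
then it is a tetrahedron of flowers: there is a vertex of the `K_4` to which every
edge outside the `K_4` is incident. -/
theorem tetrahedron_of_flowers {V : Type} (G : SimpleGraph V) (hc : G.Connected)
    (hK4 : ContainsSub G (completeGraph (Fin 4)))
    (hP6 : ¬ ContainsSub G (pathGraph 6))
    (hC5 : ¬ ContainsSub G (cycleGraph 5)) :
    ∃ f : Fin 4 → V, Function.Injective f ∧
      (∀ a b : Fin 4, a ≠ b → G.Adj (f a) (f b)) ∧
      ∃ i : Fin 4, ∀ e ∈ G.edgeSet, (¬ ∃ a b : Fin 4, e = s(f a, f b)) → f i ∈ e := by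
  classical
  obtain ⟨f, hinj, hf⟩ := hK4
  have hs : G.IsNClique 4 (Finset.univ.image f) := by
    refine ⟨?_, by rw [Finset.card_image_of_injective _ hinj, Finset.card_fin]⟩
    rw [Finset.coe_image, Finset.coe_univ, Set.image_univ]
    rintro _ ⟨a, rfl⟩ _ ⟨b, rfl⟩ hab
    exact hf a b (ne_of_apply_ne f hab)
  obtain ⟨_, hv, hleaf⟩ := hs.exists_forall_neighborSet_eq_singleton hP6 hC5 hc.preconnected
  obtain ⟨i, -, rfl⟩ := Finset.mem_image.mp hv
  refine ⟨f, hinj, hf, i, fun e he hout => ?_⟩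
  induction e using Sym2.ind with
  | _ x y =>
    rw [mem_edgeSet] at he
    by_cases hx : x ∈ Finset.univ.image f
    · by_cases hy : y ∈ Finset.univ.image f
      · obtain ⟨a, -, rfl⟩ := Finset.mem_image.mp hx
        obtain ⟨b, -, rfl⟩ := Finset.mem_image.mp hy
        exact absurd ⟨a, b, rfl⟩ hout
      · have hxi : x ∈ G.neighborSet y := he.symm
        rw [hleaf y hy, Set.mem_singleton_iff] at hxi
        exact hxi ▸ Sym2.mem_mk_left x y
    · have hyi : y ∈ G.neighborSet x := he
      rw [hleaf x hx, Set.mem_singleton_iff] at hyi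
      exact hyi ▸ Sym2.mem_mk_right x y
end

section
/- The line graph of a vase of n flowers (a triangle with n pendant edges attached at one triangle vertex) is isomorphic to the join K_1 ∨ (K_1 ∨ (K_1 ∪ K_n)), i.e., an 'ear animal' with parameters k = 0, a = b = 1, c = n. -/
/-!
The vase has four kinds of edges: `w₁w₂` and `w₁w₃` meet every other edge, `w₂w₃` meets only
those two, and the pendant edges `w₁vₖ` meet each other (at `w₁`) but not `w₂w₃`. So in the line
graph `w₁w₂` and `w₁w₃` are the two dominating vertices, and removing them leaves the isolated
vertex `w₂w₃` next to the clique of pendant edges.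
-/

open SimpleGraph

/-- The join of two simple graphs: both graphs together with all edges between them. -/
def gJoin {α β : Type*} (G : SimpleGraph α) (H : SimpleGraph β) : SimpleGraph (α ⊕ β) :=
  SimpleGraph.fromRel (fun x y =>
    (∃ a b, x = Sum.inl a ∧ y = Sum.inl b ∧ G.Adj a b) ∨
    (∃ a b, x = Sum.inr a ∧ y = Sum.inr b ∧ H.Adj a b) ∨
    (x.isLeft = true ∧ y.isRight = true))

/-- The vase of `n` flowers: a triangle on `w₁, w₂, w₃` together with `n` leaves
attached to `w₁`. -/
def vase (n : ℕ) : SimpleGraph (Fin 3 ⊕ Fin n) :=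
  SimpleGraph.fromRel (fun x y =>
    (x.isLeft = true ∧ y.isLeft = true) ∨ (x = Sum.inl 0 ∧ y.isRight = true))

section gJoin

variable {α β : Type*} (G : SimpleGraph α) (H : SimpleGraph β)

@[simp] lemma gJoin_adj_inl_inl (a b : α) :
    (gJoin G H).Adj (Sum.inl a) (Sum.inl b) ↔ G.Adj a b := by
  simpa [gJoin, G.adj_comm b a] using fun h : G.Adj a b => h.ne

@[simp] lemma gJoin_adj_inr_inr (a b : β) :
    (gJoin G H).Adj (Sum.inr a) (Sum.inr b) ↔ H.Adj a b := by
  simpa [gJoin, H.adj_comm b a] using fun h : H.Adj a b => h.ne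

@[simp] lemma gJoin_adj_inl_inr (a : α) (b : β) : (gJoin G H).Adj (Sum.inl a) (Sum.inr b) :=
  ⟨Sum.inl_ne_inr, .inl (.inr (.inr ⟨rfl, rfl⟩))⟩

@[simp] lemma gJoin_adj_inr_inl (a : β) (b : α) : (gJoin G H).Adj (Sum.inr a) (Sum.inl b) :=
  (gJoin_adj_inl_inr G H b a).symm

end gJoin

section vase

variable (n : ℕ)

@[simp] lemma vase_adj_inl_inl (i j : Fin 3) : (vase n).Adj (.inl i) (.inl j) ↔ i ≠ j := by
  simp [vase]

@[simp] lemma vase_adj_inl_inr (i : Fin 3) (k : Fin n) :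
    (vase n).Adj (.inl i) (.inr k) ↔ i = 0 := by
  simp [vase]

@[simp] lemma vase_adj_inr_inl (k : Fin n) (i : Fin 3) :
    (vase n).Adj (.inr k) (.inl i) ↔ i = 0 := by
  rw [adj_comm, vase_adj_inl_inr]

@[simp] lemma vase_not_adj_inr_inr (k l : Fin n) : ¬(vase n).Adj (.inr k) (.inr l) := by
  simp [vase]

def vaseEdge : Fin 1 ⊕ (Fin 1 ⊕ (Fin 1 ⊕ Fin n)) → (vase n).edgeSet
  | .inl _ => ⟨s(.inl 0, .inl 1), by simp⟩
  | .inr (.inl _) => ⟨s(.inl 0, .inl 2), by simp⟩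
  | .inr (.inr (.inl _)) => ⟨s(.inl 1, .inl 2), by simp⟩
  | .inr (.inr (.inr k)) => ⟨s(.inl 0, .inr k), by simp⟩

lemma vaseEdge_injective : Function.Injective (vaseEdge n) := by
  rintro (a | a | a | k) (b | b | b | l) h <;>
    simp_all [vaseEdge, Subtype.ext_iff, Fin.fin_one_eq_zero]

lemma vaseEdge_surjective : Function.Surjective (vaseEdge n) := by
  rintro ⟨e, he⟩
  induction e using Sym2.ind with
  | _ x y =>
    simp only [Sum.exists, vaseEdge, Subtype.ext_iff, Sym2.eq_iff]
    rcases x with i | k <;> rcases y with j | l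
    · fin_cases i <;> fin_cases j <;> simp_all
    all_goals simp_all

lemma lineGraph_vase_adj_vaseEdge (u v : Fin 1 ⊕ (Fin 1 ⊕ (Fin 1 ⊕ Fin n))) :
    (vase n).lineGraph.Adj (vaseEdge n u) (vaseEdge n v) ↔
      (gJoin (completeGraph (Fin 1))
        (gJoin (completeGraph (Fin 1))
          ((completeGraph (Fin 1)) ⊕g (completeGraph (Fin n))))).Adj u v := by
  rw [lineGraph_adj_iff_exists]
  rcases u with a | a | a | k <;> rcases v with b | b | b | l <;>
    simp [vaseEdge, Subtype.ext_iff, Fin.fin_one_eq_zero]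

end vase

/-- The line graph of a vase of `n` flowers is the ear animal
`K₁ ∨ (K₁ ∨ (K₁ ∪ Kₙ))`. -/
theorem lineGraph_vase (n : ℕ) :
    Nonempty ((vase n).lineGraph ≃g
      gJoin (completeGraph (Fin 1))
        (gJoin (completeGraph (Fin 1))
          ((completeGraph (Fin 1)) ⊕g (completeGraph (Fin n))))) :=
  ⟨(RelIso.mk (.ofBijective (vaseEdge n) ⟨vaseEdge_injective n, vaseEdge_surjective n⟩)
    (lineGraph_vase_adj_vaseEdge n _ _)).symm⟩
end
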